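/- The skewness tensor component T₂₂₂ of the one-dimensional normal family equals 8/σ³: ∫_ℝ ((x − μ)²/σ³ − 1/σ)³·p(x; μ, σ) dx = 8/σ³. -/
import Mathlib

open Real MeasureTheory

lemma gauss_moment (b : ℝ) (hb : 0 < b) (k : ℕ) :
    ∫ x : ℝ, x ^ (2 * k) * Real.exp (-b * x ^ 2)
      = b ^ (-(2 * (k:ℝ) + 1) / 2) * Real.Gamma ((2 * (k:ℝ) + 1) / 2) := by
  have heven : ∀ x : ℝ, (fun y : ℝ => y ^ (2 * k) * Real.exp (-b * y ^ 2)) |x|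
      = x ^ (2 * k) * Real.exp (-b * x ^ 2) := by
    intro x
    simp only [pow_mul, sq_abs]
  have hq : (-1:ℝ) < ((2 * k : ℕ) : ℝ) := by
    have : (0:ℝ) ≤ ((2 * k : ℕ) : ℝ) := Nat.cast_nonneg _
    linarith
  calc ∫ x : ℝ, x ^ (2 * k) * Real.exp (-b * x ^ 2)
      = ∫ x : ℝ, (fun y : ℝ => y ^ (2 * k) * Real.exp (-b * y ^ 2)) |x| := by
        simp_rw [heven]
    _ = 2 * ∫ x in Set.Ioi (0:ℝ), x ^ (2 * k) * Real.exp (-b * x ^ 2) :=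
        integral_comp_abs (f := fun y : ℝ => y ^ (2 * k) * Real.exp (-b * y ^ 2))
    _ = 2 * ∫ x in Set.Ioi (0:ℝ), x ^ ((2 * k : ℕ) : ℝ) * Real.exp (-b * x ^ (2:ℝ)) := by
        congr 1
        simp_rw [Real.rpow_natCast, Real.rpow_two]
    _ = b ^ (-(2 * (k:ℝ) + 1) / 2) * Real.Gamma ((2 * (k:ℝ) + 1) / 2) := by
        rw [integral_rpow_mul_exp_neg_mul_rpow (by norm_num) hq hb]
        push_cast
        ring

lemma gauss_int (b : ℝ) (hb : 0 < b) (k : ℕ) :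
    Integrable fun x : ℝ => x ^ (2 * k) * Real.exp (-b * x ^ 2) := by
  have hq : (-1:ℝ) < ((2 * k : ℕ) : ℝ) := by
    have : (0:ℝ) ≤ ((2 * k : ℕ) : ℝ) := Nat.cast_nonneg _
    linarith
  refine (integrable_rpow_mul_exp_neg_mul_sq hb hq).congr
    (Filter.Eventually.of_forall fun x => ?_)
  simp only [Real.rpow_natCast]

lemma gauss_moment_sigma (σ : ℝ) (hσ : 0 < σ) (k : ℕ) (c : ℝ)
    (hc : Real.Gamma ((2 * (k:ℝ) + 1) / 2) = c * Real.sqrt π) :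
    ∫ x : ℝ, x ^ (2 * k) * Real.exp (-(2 * σ ^ 2)⁻¹ * x ^ 2)
      = c * 2 ^ k * (Real.sqrt (2 * π) * σ) * σ ^ (2 * k) := by
  have hb : (0:ℝ) < (2 * σ ^ 2)⁻¹ := by positivity
  rw [gauss_moment _ hb k, hc]
  have h2σ : (0:ℝ) ≤ 2 * σ ^ 2 := by positivity
  have h1 : ((2 * σ ^ 2)⁻¹ : ℝ) ^ (-(2 * (k:ℝ) + 1) / 2)
      = (2 * σ ^ 2) ^ ((2 * (k:ℝ) + 1) / 2) := by
    rw [Real.inv_rpow h2σ, ← Real.rpow_neg h2σ]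
    congr 1
    ring
  have h2 : (2 * σ ^ 2) ^ ((2 * (k:ℝ) + 1) / 2)
      = (Real.sqrt 2 * σ) ^ (2 * k + 1) := by
    have : (2 * (k:ℝ) + 1) / 2 = (1/2) * ((2 * k + 1 : ℕ) : ℝ) := by push_cast; ring
    rw [this, Real.rpow_mul h2σ, Real.rpow_natCast]
    congr 1
    rw [← Real.sqrt_eq_rpow, Real.sqrt_mul (by norm_num), Real.sqrt_sq hσ.le]
  rw [h1, h2]
  have h3 : (Real.sqrt 2 * σ) ^ (2 * k + 1)
      = 2 ^ k * Real.sqrt 2 * (σ ^ (2 * k) * σ) := by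
    rw [mul_pow, pow_succ, pow_mul, Real.sq_sqrt (by norm_num : (2:ℝ) ≥ 0), pow_succ]
  rw [h3, Real.sqrt_mul (by norm_num : (0:ℝ) ≤ 2)]
  ring

lemma gamma_half : Real.Gamma ((2 * ((0:ℕ):ℝ) + 1) / 2) = 1 * Real.sqrt π := by
  norm_num [Real.Gamma_one_half_eq]

lemma gamma_3half : Real.Gamma ((2 * ((1:ℕ):ℝ) + 1) / 2) = (1/2) * Real.sqrt π := by
  have : (2 * ((1:ℕ):ℝ) + 1) / 2 = 1/2 + 1 := by norm_num
  rw [this, Real.Gamma_add_one (by norm_num), Real.Gamma_one_half_eq]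

lemma gamma_5half : Real.Gamma ((2 * ((2:ℕ):ℝ) + 1) / 2) = (3/4) * Real.sqrt π := by
  have : (2 * ((2:ℕ):ℝ) + 1) / 2 = 3/2 + 1 := by norm_num
  rw [this, Real.Gamma_add_one (by norm_num)]
  have : (3:ℝ)/2 = 1/2 + 1 := by norm_num
  rw [this, Real.Gamma_add_one (by norm_num), Real.Gamma_one_half_eq]
  ring

lemma gamma_7half : Real.Gamma ((2 * ((3:ℕ):ℝ) + 1) / 2) = (15/8) * Real.sqrt π := by
  have : (2 * ((3:ℕ):ℝ) + 1) / 2 = 5/2 + 1 := by norm_num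
  rw [this, Real.Gamma_add_one (by norm_num)]
  have : (5:ℝ)/2 = 3/2 + 1 := by norm_num
  rw [this, Real.Gamma_add_one (by norm_num)]
  have : (3:ℝ)/2 = 1/2 + 1 := by norm_num
  rw [this, Real.Gamma_add_one (by norm_num), Real.Gamma_one_half_eq]
  ring

/-- The skewness tensor component `T₂₂₂` of the normal family equals `8/σ³`. -/
theorem normal_skewness_T222 (μ σ : ℝ) (hσ : 0 < σ) :
    (∫ x : ℝ, ((x - μ) ^ 2 / σ ^ 3 - 1 / σ) ^ 3 *
        ((1 / (Real.sqrt (2 * π) * σ)) * Real.exp (-(x - μ) ^ 2 / (2 * σ ^ 2)))) = 8 / σ ^ 3 := by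
  have hb : (0:ℝ) < (2 * σ ^ 2)⁻¹ := by positivity
  set c : ℝ := 1 / (Real.sqrt (2 * π) * σ) with hc
  set g : ℝ → ℝ := fun y => (y ^ 2 / σ ^ 3 - 1 / σ) ^ 3 *
      (c * Real.exp (-y ^ 2 / (2 * σ ^ 2))) with hg
  have h0 : (∫ x : ℝ, g (x - μ)) = ∫ y : ℝ, g y := integral_sub_right_eq_self g μ
  calc (∫ x : ℝ, ((x - μ) ^ 2 / σ ^ 3 - 1 / σ) ^ 3 *
        (c * Real.exp (-(x - μ) ^ 2 / (2 * σ ^ 2))))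
      = ∫ y : ℝ, g y := h0
    _ = ∫ y : ℝ, c * ((σ⁻¹ ^ 9) * (y ^ (2*3) * Real.exp (-(2 * σ ^ 2)⁻¹ * y ^ 2))
          - (3 * σ⁻¹ ^ 7) * (y ^ (2*2) * Real.exp (-(2 * σ ^ 2)⁻¹ * y ^ 2))
          + ((3 * σ⁻¹ ^ 5) * (y ^ (2*1) * Real.exp (-(2 * σ ^ 2)⁻¹ * y ^ 2))
          - (σ⁻¹ ^ 3) * (y ^ (2*0) * Real.exp (-(2 * σ ^ 2)⁻¹ * y ^ 2)))) := by
        congr 1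
        funext y
        have hE : Real.exp (-y ^ 2 / (2 * σ ^ 2)) = Real.exp (-(2 * σ ^ 2)⁻¹ * y ^ 2) := by
          congr 1
          field_simp
        rw [hg]
        simp only [hE]
        field_simp
        ring
    _ = 8 / σ ^ 3 := by
        rw [integral_const_mul]
        rw [integral_add ?ha ?hb', integral_sub ?hc' ?hd, integral_sub ?he ?hf]
        case ha => exact ((gauss_int _ hb 3).const_mul _).sub ((gauss_int _ hb 2).const_mul _)
        case hb' => exact ((gauss_int _ hb 1).const_mul _).sub ((gauss_int _ hb 0).const_mul _)
        case hc' => exact (gauss_int _ hb 3).const_mul _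
        case hd => exact (gauss_int _ hb 2).const_mul _
        case he => exact (gauss_int _ hb 1).const_mul _
        case hf => exact (gauss_int _ hb 0).const_mul _
        rw [integral_const_mul, integral_const_mul, integral_const_mul, integral_const_mul]
        rw [gauss_moment_sigma σ hσ 3 _ gamma_7half, gauss_moment_sigma σ hσ 2 _ gamma_5half,
          gauss_moment_sigma σ hσ 1 _ gamma_3half, gauss_moment_sigma σ hσ 0 _ gamma_half]
        have hπ : Real.sqrt π ≠ 0 := by positivity
        have h2 : Real.sqrt 2 ≠ 0 := by positivity
        rw [hc, Real.sqrt_mul (by norm_num : (0:ℝ) ≤ 2) π]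
        field_simp
        ring
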